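/- For any unitaries A,B ∈ U(2) with det A = det B, the conjugate G(A,B)† (X⊗I) G(A,B) is a linear combination of Z⊗X, Z⊗Y, X⊗I, Y⊗I, and similarly for conjugation of Z⊗Y and Y⊗I. Hence the 4-dimensional span of {Z⊗X, Z⊗Y, X⊗I, Y⊗I} is invariant under conjugation by matchgates. -/

import Mathlib

open Matrix Kronecker
noncomputable section

/-- 2×2 complex matrices -/
abbrev M2 := Matrix (Fin 2) (Fin 2) ℂ
/-- 4×4 complex matrices, indexed by two qubits -/
abbrev M4 := Matrix (Fin 2 × Fin 2) (Fin 2 × Fin 2) ℂ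

/-- Pauli X -/
def PX : M2 := !![0, 1; 1, 0]
/-- Pauli Y -/
def PY : M2 := !![0, -Complex.I; Complex.I, 0]
/-- Pauli Z -/
def PZ : M2 := !![1, 0; 0, -1]

/-- The matchgate matrix `G(A,B)`: `A` acts on the even-parity subspace
spanned by `|00⟩, |11⟩` and `B` on the odd-parity subspace spanned by
`|01⟩, |10⟩`. -/
def G (A B : M2) : M4 := fun p q =>
  if p.1 = p.2 then (if q.1 = q.2 then A p.1 q.1 else 0)
  else (if q.1 ≠ q.2 then B p.1 q.1 else 0)

/-!
Order the two-qubit basis by parity, `|00⟩, |11⟩ | |01⟩, |10⟩`. Then `G(A,B)` is the block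
diagonal matrix `diag(A, B)`, and the span of `Z⊗X, Z⊗Y, X⊗I, Y⊗I` (the Majorana operators of
the Jordan–Wigner transform, with `i • Z⊗Y` corresponding to `C = 1`) is exactly the set of
block antidiagonal matrices `[[0, C], [-adj C, 0]]` with `C` an arbitrary `2 × 2` matrix.
Conjugating by `G(A,B)` sends the blocks to `A†CB` and `B†(-adj C)A`. Since `adj U = det U • U†`
for unitary `U`, we get `adj (A†CB) = (det B * conj (det A)) • B† (adj C) A`, and the scalar is
`|det A|² = 1` precisely because `det A = det B`; so the result is again of the same shape.
-/

theorem Matrix.adjugate_eq_det_smul_conjTranspose {n α : Type*} [Fintype n] [DecidableEq n]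
    [CommRing α] [StarRing α] {U : Matrix n n α} (hU : U ∈ unitaryGroup n α) :
    adjugate U = U.det • Uᴴ := by
  calc adjugate U = adjugate U * (U * Uᴴ) := by rw [← star_eq_conjTranspose, hU.2, mul_one]
    _ = U.det • Uᴴ := by rw [← mul_assoc, adjugate_mul, smul_mul, one_mul]

theorem Matrix.adjugate_conjTranspose_mul_mul {n α : Type*} [Fintype n] [DecidableEq n]
    [CommRing α] [StarRing α] {U V : Matrix n n α} (hU : U ∈ unitaryGroup n α)
    (hV : V ∈ unitaryGroup n α) (C : Matrix n n α) :
    adjugate (Uᴴ * C * V) = (V.det * star U.det) • (Vᴴ * adjugate C * U) := by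
  rw [adjugate_mul_distrib, adjugate_mul_distrib, adjugate_eq_det_smul_conjTranspose hV,
    ← adjugate_conjTranspose, adjugate_eq_det_smul_conjTranspose hU]
  simp [conjTranspose_smul, smul_smul, mul_assoc, mul_comm]

theorem Matrix.adjugate_fin_two_eq_trace_smul_sub {α : Type*} [CommRing α]
    (C : Matrix (Fin 2) (Fin 2) α) :
    adjugate C = trace C • 1 - C := by
  ext i j; fin_cases i <;> fin_cases j <;> simp [adjugate_fin_two, trace_fin_two]

def parityEquiv : Fin 2 × Fin 2 ≃ Fin 2 ⊕ Fin 2 where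
  toFun p := if p.1 = p.2 then .inl p.1 else .inr p.1
  invFun := Sum.elim (fun a => (a, a)) (fun a => (a, a.rev))
  left_inv p := by fin_cases p <;> rfl
  right_inv s := by rcases s with a | a <;> fin_cases a <;> rfl

def parityBlocks (P Q R S : M2) : M4 := (fromBlocks P Q R S).submatrix parityEquiv parityEquiv

theorem G_eq_parityBlocks (A B : M2) : G A B = parityBlocks A 0 0 B := by
  ext ⟨a, b⟩ ⟨c, d⟩
  fin_cases a <;> fin_cases b <;> fin_cases c <;> fin_cases d <;> rfl

theorem parityBlocks_conjTranspose (P Q R S : M2) :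
    (parityBlocks P Q R S)ᴴ = parityBlocks Pᴴ Rᴴ Qᴴ Sᴴ := by
  rw [parityBlocks, conjTranspose_submatrix, fromBlocks_conjTranspose, parityBlocks]

theorem parityBlocks_mul (P Q R S P' Q' R' S' : M2) :
    parityBlocks P Q R S * parityBlocks P' Q' R' S' =
      parityBlocks (P * P' + Q * R') (P * Q' + Q * S') (R * P' + S * R') (R * Q' + S * S') := by
  rw [parityBlocks, parityBlocks, submatrix_mul_equiv, fromBlocks_multiply, parityBlocks]

theorem parityBlocks_add (P Q R S P' Q' R' S' : M2) :
    parityBlocks P Q R S + parityBlocks P' Q' R' S' =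
      parityBlocks (P + P') (Q + Q') (R + R') (S + S') := by
  rw [parityBlocks, parityBlocks, parityBlocks, ← fromBlocks_add]
  rfl

theorem parityBlocks_smul (c : ℂ) (P Q R S : M2) :
    c • parityBlocks P Q R S = parityBlocks (c • P) (c • Q) (c • R) (c • S) := by
  rw [parityBlocks, parityBlocks, ← fromBlocks_smul]
  rfl

@[simps]
def majorana : M2 →ₗ[ℂ] M4 where
  toFun C := parityBlocks 0 C (-adjugate C) 0
  map_add' C D := by
    rw [parityBlocks_add, adjugate_fin_two_eq_trace_smul_sub, adjugate_fin_two_eq_trace_smul_sub,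
      adjugate_fin_two_eq_trace_smul_sub, trace_add, add_smul]
    congr 1 <;> abel
  map_smul' c C := by
    rw [RingHom.id_apply, parityBlocks_smul, adjugate_fin_two_eq_trace_smul_sub,
      adjugate_fin_two_eq_trace_smul_sub, trace_smul]
    simp only [smul_zero, smul_neg, smul_sub, smul_smul, smul_eq_mul]

theorem conjTranspose_G_mul_majorana_mul_G {A B : M2} (hA : A ∈ unitaryGroup (Fin 2) ℂ)
    (hB : B ∈ unitaryGroup (Fin 2) ℂ) (hdet : A.det = B.det) (C : M2) :
    (G A B)ᴴ * majorana C * G A B = majorana (Aᴴ * C * B) := by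
  have hscalar : B.det * star A.det = 1 := by
    rw [← hdet]; exact Unitary.mul_star_self_of_mem (det_of_mem_unitary hA)
  rw [G_eq_parityBlocks, majorana_apply, majorana_apply, parityBlocks_conjTranspose,
    parityBlocks_mul, parityBlocks_mul, adjugate_conjTranspose_mul_mul hA hB, hscalar, one_smul]
  simp [mul_assoc]

theorem majorana_one : majorana 1 = Complex.I • (PZ ⊗ₖ PY) := by
  ext ⟨a, b⟩ ⟨c, d⟩
  fin_cases a <;> fin_cases b <;> fin_cases c <;> fin_cases d <;>
    simp [majorana_apply, parityBlocks, parityEquiv, PZ, PY]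

theorem majorana_PX : majorana PX = PX ⊗ₖ (1 : M2) := by
  ext ⟨a, b⟩ ⟨c, d⟩
  fin_cases a <;> fin_cases b <;> fin_cases c <;> fin_cases d <;>
    simp [majorana_apply, parityBlocks, parityEquiv, adjugate_fin_two, PX]

theorem majorana_PY : majorana PY = PY ⊗ₖ (1 : M2) := by
  ext ⟨a, b⟩ ⟨c, d⟩
  fin_cases a <;> fin_cases b <;> fin_cases c <;> fin_cases d <;>
    simp [majorana_apply, parityBlocks, parityEquiv, adjugate_fin_two, PY]

theorem majorana_PZ : majorana PZ = PZ ⊗ₖ PX := by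
  ext ⟨a, b⟩ ⟨c, d⟩
  fin_cases a <;> fin_cases b <;> fin_cases c <;> fin_cases d <;>
    simp [majorana_apply, parityBlocks, parityEquiv, adjugate_fin_two, PX, PZ]

theorem eq_pauli_decomposition (C : M2) :
    C = ((C 0 0 + C 1 1) / 2) • 1 + ((C 0 1 + C 1 0) / 2) • PX +
      (Complex.I * (C 0 1 - C 1 0) / 2) • PY + ((C 0 0 - C 1 1) / 2) • PZ := by
  ext i j
  fin_cases i <;> fin_cases j <;> simp [PX, PY, PZ] <;> ring_nf <;> simp only [Complex.I_sq] <;>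
    ring

theorem span_majorana_basis_eq_range :
    Submodule.span ℂ ({PZ ⊗ₖ PX, PZ ⊗ₖ PY, PX ⊗ₖ (1 : M2), PY ⊗ₖ (1 : M2)} : Set M4) =
      LinearMap.range majorana := by
  apply le_antisymm
  · rw [Submodule.span_le]
    rintro _ (rfl | rfl | rfl | rfl)
    · exact ⟨PZ, majorana_PZ⟩
    · refine ⟨-Complex.I • 1, ?_⟩
      rw [map_smul, majorana_one, smul_smul, neg_mul, Complex.I_mul_I, neg_neg, one_smul]
    · exact ⟨PX, majorana_PX⟩
    · exact ⟨PY, majorana_PY⟩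
  · rintro _ ⟨C, rfl⟩
    rw [eq_pauli_decomposition C]
    simp only [map_add, map_smul, majorana_one, majorana_PX, majorana_PY, majorana_PZ, smul_smul]
    refine add_mem (add_mem (add_mem ?_ ?_) ?_) ?_ <;>
      exact Submodule.smul_mem _ _ (Submodule.subset_span (by simp))

theorem conjTranspose_G_mul_mul_G_mem_span {A B : M2} (hA : A ∈ unitaryGroup (Fin 2) ℂ)
    (hB : B ∈ unitaryGroup (Fin 2) ℂ) (hdet : A.det = B.det) {M : M4}
    (hM : M ∈ Submodule.span ℂ ({PZ ⊗ₖ PX, PZ ⊗ₖ PY, PX ⊗ₖ (1 : M2), PY ⊗ₖ (1 : M2)} : Set M4)) :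
    (G A B)ᴴ * M * G A B ∈
      Submodule.span ℂ ({PZ ⊗ₖ PX, PZ ⊗ₖ PY, PX ⊗ₖ (1 : M2), PY ⊗ₖ (1 : M2)} : Set M4) := by
  rw [span_majorana_basis_eq_range] at hM ⊢
  obtain ⟨C, rfl⟩ := hM
  exact ⟨Aᴴ * C * B, (conjTranspose_G_mul_majorana_mul_G hA hB hdet C).symm⟩

theorem stmt7 (A B : M2)
    (hA : A ∈ Matrix.unitaryGroup (Fin 2) ℂ)
    (hB : B ∈ Matrix.unitaryGroup (Fin 2) ℂ)
    (hdet : A.det = B.det) :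
    ((G A B)ᴴ * (PX ⊗ₖ (1 : M2)) * G A B ∈
      Submodule.span ℂ ({PZ ⊗ₖ PX, PZ ⊗ₖ PY, PX ⊗ₖ (1 : M2), PY ⊗ₖ (1 : M2)} :
        Set M4)) ∧
    ((G A B)ᴴ * (PZ ⊗ₖ PY) * G A B ∈
      Submodule.span ℂ ({PZ ⊗ₖ PX, PZ ⊗ₖ PY, PX ⊗ₖ (1 : M2), PY ⊗ₖ (1 : M2)} :
        Set M4)) ∧
    ((G A B)ᴴ * (PY ⊗ₖ (1 : M2)) * G A B ∈
      Submodule.span ℂ ({PZ ⊗ₖ PX, PZ ⊗ₖ PY, PX ⊗ₖ (1 : M2), PY ⊗ₖ (1 : M2)} :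
        Set M4)) ∧
    (∀ M : M4, M ∈ Submodule.span ℂ
        ({PZ ⊗ₖ PX, PZ ⊗ₖ PY, PX ⊗ₖ (1 : M2), PY ⊗ₖ (1 : M2)} : Set M4) →
      (G A B)ᴴ * M * G A B ∈ Submodule.span ℂ
        ({PZ ⊗ₖ PX, PZ ⊗ₖ PY, PX ⊗ₖ (1 : M2), PY ⊗ₖ (1 : M2)} : Set M4)) :=
  ⟨conjTranspose_G_mul_mul_G_mem_span hA hB hdet (Submodule.subset_span (by simp)),
    conjTranspose_G_mul_mul_G_mem_span hA hB hdet (Submodule.subset_span (by simp)),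
    conjTranspose_G_mul_mul_G_mem_span hA hB hdet (Submodule.subset_span (by simp)),
    fun _ => conjTranspose_G_mul_mul_G_mem_span hA hB hdet⟩
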